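/- arXiv:math/0602067 — 2 statements merged into one kernel-verified Lean document; each statement's English description precedes it below -/
import Mathlib

section
/- Let X be a Banach space and L : X → X a bounded linear operator such that sup_{n∈ℕ} ‖Lⁿ‖ ≤ C for some constant C. If z ∈ ℂ with |z| = 1 and h₀, h₁ ∈ X satisfy L h₀ = z h₀ and L h₁ = z h₁ + h₀, then h₀ = 0. (I.e., there are no Jordan blocks in the peripheral spectrum of a power-bounded operator.) -/
/-- No Jordan blocks in the peripheral spectrum of a power-bounded operator. -/
theorem no_jordan_blocks_peripheral
    {X : Type*} [NormedAddCommGroup X] [NormedSpace ℂ X] [CompleteSpace X]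
    (L : X →L[ℂ] X) (C : ℝ) (hC : 0 < C) (hpow : ∀ n : ℕ, ‖L ^ n‖ ≤ C)
    (z : ℂ) (hz : ‖z‖ = 1) (h₀ h₁ : X)
    (hh₀ : L h₀ = z • h₀) (hh₁ : L h₁ = z • h₁ + h₀) :
    h₀ = 0 := by
  have key : ∀ n : ℕ, (L ^ (n + 1)) h₁ = (z ^ (n + 1)) • h₁ + ((n + 1 : ℂ) * z ^ n) • h₀ := by
    intro n
    induction n with
    | zero => simp [pow_one, hh₁]
    | succ n ih =>
      have : (L ^ (n + 2)) h₁ = L ((L ^ (n + 1)) h₁) := by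
        rw [pow_succ']
        rfl
      rw [this, ih, map_add, map_smul, map_smul, hh₁, hh₀]
      simp only [smul_add, smul_smul]
      rw [add_assoc, ← add_smul]
      congr 2
      push_cast
      ring
  -- bound: (n+1) ‖h₀‖ ≤ (C + 1) ‖h₁‖
  have bound : ∀ n : ℕ, ((n : ℝ) + 1) * ‖h₀‖ ≤ (C + 1) * ‖h₁‖ := by
    intro n
    have h1 : ‖((n + 1 : ℂ) * z ^ n) • h₀‖ = ((n : ℝ) + 1) * ‖h₀‖ := by
      rw [norm_smul, norm_mul, norm_pow, hz, one_pow, mul_one]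
      congr 1
      rw [show ((n : ℂ) + 1) = ((n + 1 : ℕ) : ℂ) by push_cast; ring, Complex.norm_natCast]
      push_cast; ring
    have h2 : ((n + 1 : ℂ) * z ^ n) • h₀ = (L ^ (n + 1)) h₁ - (z ^ (n + 1)) • h₁ := by
      rw [key n]; abel
    calc ((n : ℝ) + 1) * ‖h₀‖ = ‖((n + 1 : ℂ) * z ^ n) • h₀‖ := h1.symm
      _ = ‖(L ^ (n + 1)) h₁ - (z ^ (n + 1)) • h₁‖ := by rw [h2]
      _ ≤ ‖(L ^ (n + 1)) h₁‖ + ‖(z ^ (n + 1)) • h₁‖ := norm_sub_le _ _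
      _ ≤ C * ‖h₁‖ + 1 * ‖h₁‖ := by
          gcongr
          · exact le_trans ((L ^ (n + 1)).le_opNorm h₁) (by gcongr; exact hpow (n + 1))
          · rw [norm_smul, norm_pow, hz, one_pow]
      _ = (C + 1) * ‖h₁‖ := by ring
  by_contra h
  have hpos : 0 < ‖h₀‖ := norm_pos_iff.mpr h
  obtain ⟨n, hn⟩ := exists_nat_gt ((C + 1) * ‖h₁‖ / ‖h₀‖)
  have := bound n
  have : ((n : ℝ) + 1) ≤ (C + 1) * ‖h₁‖ / ‖h₀‖ := (le_div_iff₀ hpos).mpr this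
  linarith
end

section
/- Let X, Y be Banach spaces with X continuously and injectively embedded in Y. Suppose L : X → X and also L : Y → Y are bounded, and suppose for some τ ∈ (0,1), C > 0: ‖Lⁿh‖_X ≤ C τⁿ ‖h‖_X + C |h|_Y for all n and h ∈ X. If moreover the unit ball of X is relatively compact in Y, then L : X → X is quasi-compact with essential spectral radius at most τ. (Hennion's theorem / Lasota-Yorke + compactness implies quasicompactness.) -/
open Filter Topology


section Hennion

variable {X Y : Type*} [NormedAddCommGroup X] [NormedSpace ℂ X]
  [NormedAddCommGroup Y] [NormedSpace ℂ Y]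

/-- Telescoping identity. -/
lemma hennion_tele (LX : X →L[ℂ] X) (z : ℂ) : ∀ (m : ℕ) (x : X),
    (LX ^ m) x = z ^ m • x +
      ∑ j ∈ Finset.range m, z ^ (m - 1 - j) • (LX ^ j) (LX x - z • x) := by
  intro m
  induction m with
  | zero => intro x; simp
  | succ m ih =>
    intro x
    have h1 : (LX ^ (m + 1)) x = (LX ^ m) (LX x) := by
      rw [pow_succ]; rfl
    rw [h1, ih (LX x)]
    rw [Finset.sum_range_succ' (fun j => z ^ (m + 1 - 1 - j) • (LX ^ j) (LX x - z • x))]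
    have h2 : ∀ j ∈ Finset.range m,
        z ^ (m - 1 - j) • (LX ^ j) (LX (LX x) - z • LX x)
          = z ^ (m + 1 - 1 - (j + 1)) • (LX ^ (j + 1)) (LX x - z • x) := by
      intro j hj
      have hpow : (LX ^ (j+1)) (LX x - z • x) = (LX ^ j) (LX (LX x) - z • LX x) := by
        rw [pow_succ, ContinuousLinearMap.mul_apply, map_sub, map_smul]
      rw [hpow]
      congr 2
      omega
    rw [Finset.sum_congr rfl h2]
    have h3 : z ^ (m + 1) • x + z ^ (m + 1 - 1 - 0) • (LX ^ 0) (LX x - z • x)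
        = z ^ m • LX x := by
      simp only [pow_zero, ContinuousLinearMap.one_apply, Nat.add_sub_cancel, Nat.sub_zero,
        smul_sub, smul_smul, pow_succ]
      abel
    rw [← h3]
    abel

lemma hennion_pow_eig (LX : X →L[ℂ] X) {z : ℂ} {v : X} (h : LX v = z • v) (n : ℕ) :
    (LX ^ n) v = z ^ n • v := by
  induction n with
  | zero => simp
  | succ n ih =>
    have h1 : (LX ^ (n + 1)) v = LX ((LX ^ n) v) := by rw [pow_succ']; rfl
    rw [h1, ih, map_smul, h, smul_smul, ← pow_succ]

end Hennion


section Hennion2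
variable {X Y : Type*} [NormedAddCommGroup X] [NormedSpace ℂ X]
  [NormedAddCommGroup Y] [NormedSpace ℂ Y]

lemma hennion_subseq (ι : X →L[ℂ] Y)
    (hcpt : IsCompact (closure (ι '' Metric.closedBall (0 : X) 1)))
    (u : ℕ → X) (hu : ∀ n, ‖u n‖ ≤ 1) :
    ∃ φ : ℕ → ℕ, StrictMono φ ∧ CauchySeq (fun n => ι (u (φ n))) := by
  have hmem : ∀ n, ι (u n) ∈ closure (ι '' Metric.closedBall (0 : X) 1) := fun n =>
    subset_closure ⟨u n, by simpa [Metric.mem_closedBall, dist_zero_right] using hu n, rfl⟩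
  obtain ⟨y, -, φ, hφ, hconv⟩ := hcpt.tendsto_subseq hmem
  exact ⟨φ, hφ, hconv.cauchySeq⟩

lemma hennion_key (LX : X →L[ℂ] X) (z : ℂ) (m : ℕ) (a b : X) :
    ‖z‖ ^ m * ‖a - b‖ ≤ ‖(LX ^ m) (a - b)‖ +
      (∑ j ∈ Finset.range m, ‖z‖ ^ (m - 1 - j) * ‖(LX ^ j : X →L[ℂ] X)‖) *
        (‖LX a - z • a‖ + ‖LX b - z • b‖) := by
  have h := hennion_tele LX z m (a - b)
  have hz : z ^ m • (a - b) = (LX ^ m) (a - b)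
      - ∑ j ∈ Finset.range m, z ^ (m-1-j) • (LX ^ j) (LX (a-b) - z • (a-b)) := by
    rw [h]; abel
  have hD : LX (a - b) - z • (a - b) = (LX a - z • a) - (LX b - z • b) := by
    rw [map_sub, smul_sub]; abel
  calc ‖z‖ ^ m * ‖a - b‖ = ‖z ^ m • (a - b)‖ := by rw [norm_smul, norm_pow]
    _ ≤ ‖(LX ^ m) (a - b)‖
        + ‖∑ j ∈ Finset.range m, z ^ (m-1-j) • (LX ^ j) (LX (a-b) - z • (a-b))‖ := by
        rw [hz]; exact norm_sub_le _ _
    _ ≤ _ := by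
        refine add_le_add le_rfl ?_
        calc ‖∑ j ∈ Finset.range m, z ^ (m-1-j) • (LX ^ j) (LX (a-b) - z • (a-b))‖
            ≤ ∑ j ∈ Finset.range m, ‖z ^ (m-1-j) • (LX ^ j) (LX (a-b) - z • (a-b))‖ :=
              norm_sum_le _ _
          _ ≤ ∑ j ∈ Finset.range m, ‖z‖ ^ (m-1-j) * ‖(LX ^ j : X →L[ℂ] X)‖
                * (‖LX a - z • a‖ + ‖LX b - z • b‖) := by
              refine Finset.sum_le_sum fun j hj => ?_
              rw [norm_smul, norm_pow, mul_assoc]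
              refine mul_le_mul_of_nonneg_left ?_ (by positivity)
              calc ‖(LX ^ j) (LX (a-b) - z • (a-b))‖
                  ≤ ‖(LX ^ j : X →L[ℂ] X)‖ * ‖LX (a-b) - z • (a-b)‖ :=
                    ContinuousLinearMap.le_opNorm _ _
                _ ≤ ‖(LX ^ j : X →L[ℂ] X)‖ * (‖LX a - z • a‖ + ‖LX b - z • b‖) := by
                    refine mul_le_mul_of_nonneg_left ?_ (norm_nonneg _)
                    rw [hD]; exact norm_sub_le _ _
          _ = _ := by rw [← Finset.sum_mul]

lemma hennion_exists_m {τ R K : ℝ} (hτ0 : 0 ≤ τ) (hR : τ < R) (hK : 0 < K) :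
    ∃ m : ℕ, K * τ ^ m < R ^ m := by
  have hR0 : 0 < R := lt_of_le_of_lt hτ0 hR
  obtain ⟨m, hm⟩ := exists_pow_lt_of_lt_one (show (0:ℝ) < 1/K by positivity)
    (show τ / R < 1 by rw [div_lt_one hR0]; exact hR)
  refine ⟨m, ?_⟩
  rw [div_pow, div_lt_div_iff₀ (by positivity) hK] at hm
  nlinarith [pow_pos hR0 m]

lemma hennion_approx_eig [CompleteSpace X] (ι : X →L[ℂ] Y) (LX : X →L[ℂ] X) {τ C : ℝ}
    (hτ0 : 0 < τ) (hC : 0 < C)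
    (hLY : ∀ (n : ℕ) (h : X), ‖(LX ^ n) h‖ ≤ C * τ ^ n * ‖h‖ + C * ‖ι h‖)
    (hcpt : IsCompact (closure (ι '' Metric.closedBall (0 : X) 1)))
    {z : ℂ} (hz : τ < ‖z‖) (u : ℕ → X) (hu : ∀ n, ‖u n‖ = 1)
    (hDu : Tendsto (fun n => ‖LX (u n) - z • u n‖) atTop (𝓝 0)) :
    ∃ v : X, v ≠ 0 ∧ LX v = z • v := by
  have hz0 : 0 < ‖z‖ := hτ0.trans hz
  obtain ⟨m, hm⟩ := hennion_exists_m (le_of_lt hτ0) hz (show (0:ℝ) < 2 * C by positivity)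
  set K : ℝ := ∑ j ∈ Finset.range m, ‖z‖ ^ (m - 1 - j) * ‖(LX ^ j : X →L[ℂ] X)‖ with hKdef
  have hK0 : 0 ≤ K := Finset.sum_nonneg fun j _ => by positivity
  obtain ⟨φ, hφmono, hφcauchy⟩ := hennion_subseq ι hcpt u (fun n => le_of_eq (hu n))
  set s : ℕ → X := u ∘ φ with hsdef
  have hDs : Tendsto (fun n => ‖LX (s n) - z • s n‖) atTop (𝓝 0) :=
    hDu.comp hφmono.tendsto_atTop
  set c : ℝ := ‖z‖ ^ m / 2 with hcdef
  have hc0 : 0 < c := by positivity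
  have hpair : ∀ p q : ℕ, c * ‖s p - s q‖ ≤
      C * ‖ι (s p) - ι (s q)‖ + K * (‖LX (s p) - z • s p‖ + ‖LX (s q) - z • s q‖) := by
    intro p q
    have h1 := hennion_key LX z m (s p) (s q)
    have h2 := hLY m (s p - s q)
    have h3 : C * τ ^ m * ‖s p - s q‖ ≤ c * ‖s p - s q‖ := by
      refine mul_le_mul_of_nonneg_right ?_ (norm_nonneg _)
      rw [hcdef]; nlinarith
    have h4 : ι (s p - s q) = ι (s p) - ι (s q) := map_sub ι _ _
    rw [h4] at h2
    nlinarith [norm_nonneg (s p - s q), norm_nonneg (ι (s p) - ι (s q))]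
  have hsCauchy : CauchySeq s := by
    rw [Metric.cauchySeq_iff']
    intro ε hε
    set δ : ℝ := c * ε / (C + 2 * K + 1) with hδdef
    have hδ0 : 0 < δ := by positivity
    obtain ⟨N₁, hN₁⟩ := Metric.cauchySeq_iff.mp hφcauchy δ hδ0
    obtain ⟨N₂, hN₂⟩ := (Metric.tendsto_atTop.mp hDs) δ hδ0
    refine ⟨max N₁ N₂, fun n hn => ?_⟩
    have hn1 : N₁ ≤ n := le_trans (le_max_left _ _) hn
    have hn2 : N₂ ≤ n := le_trans (le_max_right _ _) hn
    have hι := hN₁ n hn1 (max N₁ N₂) (le_max_left _ _)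
    have hε1 := hN₂ n hn2
    have hε2 := hN₂ (max N₁ N₂) (le_max_right _ _)
    rw [Real.dist_eq] at hε1 hε2
    have hε1' : ‖LX (s n) - z • s n‖ < δ := by
      have := abs_nonneg (‖LX (s n) - z • s n‖ - 0)
      rw [sub_zero] at hε1
      exact lt_of_le_of_lt (le_abs_self _) hε1
    have hε2' : ‖LX (s (max N₁ N₂)) - z • s (max N₁ N₂)‖ < δ := by
      rw [sub_zero] at hε2
      exact lt_of_le_of_lt (le_abs_self _) hε2
    have hιn : ‖ι (s n) - ι (s (max N₁ N₂))‖ < δ := by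
      rw [dist_eq_norm] at hι; exact hι
    have hp := hpair n (max N₁ N₂)
    rw [dist_eq_norm]
    have hfinal : c * ‖s n - s (max N₁ N₂)‖ < C * δ + K * (δ + δ) := by
      have h5 : K * (‖LX (s n) - z • s n‖ + ‖LX (s (max N₁ N₂)) - z • s (max N₁ N₂)‖)
          ≤ K * (δ + δ) := by
        refine mul_le_mul_of_nonneg_left ?_ hK0
        linarith
      have h6 : C * ‖ι (s n) - ι (s (max N₁ N₂))‖ < C * δ :=
        mul_lt_mul_of_pos_left hιn hC
      linarith
    have : (C + 2 * K) * δ < c * ε := by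
      have h7 : (C + 2 * K) / (C + 2 * K + 1) < 1 := by
        rw [div_lt_one (by positivity)]; linarith
      have h8 : (C + 2 * K) * δ = (c * ε) * ((C + 2 * K) / (C + 2 * K + 1)) := by
        rw [hδdef]; ring
      rw [h8]
      nlinarith [mul_pos hc0 hε]
    have hlt : c * ‖s n - s (max N₁ N₂)‖ < c * ε := by nlinarith
    exact lt_of_mul_lt_mul_left hlt (le_of_lt hc0)
  obtain ⟨v, hv⟩ := cauchySeq_tendsto_of_complete hsCauchy
  have hvnorm : ‖v‖ = 1 := by
    have h1 : Tendsto (fun n => ‖s n‖) atTop (𝓝 ‖v‖) := hv.norm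
    have h2 : (fun n => ‖s n‖) = fun _ => (1:ℝ) := funext fun n => hu (φ n)
    rw [h2] at h1
    exact tendsto_nhds_unique h1 tendsto_const_nhds
  have hLv : Tendsto (fun n => LX (s n) - z • s n) atTop (𝓝 (LX v - z • v)) :=
    ((LX.continuous.tendsto v).comp hv).sub (hv.const_smul z)
  have hL0 : Tendsto (fun n => LX (s n) - z • s n) atTop (𝓝 0) :=
    tendsto_zero_iff_norm_tendsto_zero.mpr hDs
  have heq : LX v - z • v = 0 := tendsto_nhds_unique hLv hL0
  exact ⟨v, by rw [← norm_ne_zero_iff, hvnorm]; norm_num, by rwa [sub_eq_zero] at heq⟩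

end Hennion2

section Hennion3
variable {X Y : Type*} [NormedAddCommGroup X] [NormedSpace ℂ X]
  [NormedAddCommGroup Y] [NormedSpace ℂ Y]

lemma hennion_bounded_below [CompleteSpace X] (ι : X →L[ℂ] Y) (LX : X →L[ℂ] X) {τ C : ℝ}
    (hτ0 : 0 < τ) (hC : 0 < C)
    (hLY : ∀ (n : ℕ) (h : X), ‖(LX ^ n) h‖ ≤ C * τ ^ n * ‖h‖ + C * ‖ι h‖)
    (hcpt : IsCompact (closure (ι '' Metric.closedBall (0 : X) 1)))
    {z : ℂ} (hz : τ < ‖z‖) (hne : ∀ v : X, LX v = z • v → v = 0) :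
    ∃ c : ℝ, 0 < c ∧ ∀ x : X, c * ‖x‖ ≤ ‖LX x - z • x‖ := by
  by_contra hcon
  push_neg at hcon
  have hseq : ∀ n : ℕ, ∃ u : X, ‖u‖ = 1 ∧ ‖LX u - z • u‖ < 1 / (n + 1) := by
    intro n
    obtain ⟨x, hx⟩ := hcon (1 / (n + 1)) (by positivity)
    have hxne : x ≠ 0 := by
      rintro rfl
      simp only [map_zero, smul_zero, sub_zero, norm_zero, mul_zero] at hx
      exact lt_irrefl 0 hx
    have hn0 : ‖x‖ ≠ 0 := norm_ne_zero_iff.mpr hxne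
    refine ⟨(‖x‖ : ℂ)⁻¹ • x, ?_, ?_⟩
    · rw [norm_smul, norm_inv, Complex.norm_real, Real.norm_eq_abs, abs_norm]
      field_simp
    · have heq : LX ((‖x‖ : ℂ)⁻¹ • x) - z • ((‖x‖ : ℂ)⁻¹ • x)
          = (‖x‖ : ℂ)⁻¹ • (LX x - z • x) := by
        rw [map_smul, smul_sub, smul_comm]
      rw [heq, norm_smul, norm_inv, Complex.norm_real, Real.norm_eq_abs, abs_norm]
      rw [inv_mul_lt_iff₀ (lt_of_le_of_ne (norm_nonneg x) (Ne.symm hn0))]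
      calc ‖LX x - z • x‖ < 1 / (n + 1) * ‖x‖ := hx
        _ = ‖x‖ * (1 / (n + 1)) := by ring
  choose u hu1 hu2 using hseq
  have hDu : Filter.Tendsto (fun n => ‖LX (u n) - z • u n‖) Filter.atTop (nhds 0) := by
    refine squeeze_zero (fun n => norm_nonneg _) (fun n => le_of_lt (hu2 n)) ?_
    exact tendsto_one_div_add_atTop_nhds_zero_nat
  obtain ⟨v, hvne, hveig⟩ := hennion_approx_eig ι LX hτ0 hC hLY hcpt hz u hu1 hDu
  exact hvne (hne v hveig)

lemma hennion_eig_fd [CompleteSpace X] (ι : X →L[ℂ] Y) (LX : X →L[ℂ] X) {τ C : ℝ}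
    (hτ0 : 0 < τ) (hC : 0 < C)
    (hLY : ∀ (n : ℕ) (h : X), ‖(LX ^ n) h‖ ≤ C * τ ^ n * ‖h‖ + C * ‖ι h‖)
    (hcpt : IsCompact (closure (ι '' Metric.closedBall (0 : X) 1)))
    {z : ℂ} (hz : τ < ‖z‖) :
    FiniteDimensional ℂ ↥(Module.End.eigenspace (LX : X →ₗ[ℂ] X) z) := by
  by_contra hfd
  obtain ⟨R, f, hR1, hfle, hfsep⟩ := exists_seq_norm_le_one_le_norm_sub hfd
  have hR0 : 0 < R := lt_trans zero_lt_one hR1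
  obtain ⟨mex, hmex⟩ := hennion_exists_m hτ0.le hz (show (0:ℝ) < 2 * C by positivity)
  -- lower bound for ι on the eigenspace
  have hlow : ∀ w : X, w ∈ Module.End.eigenspace (LX : X →ₗ[ℂ] X) z →
      ‖z‖ ^ mex / 2 * ‖w‖ ≤ C * ‖ι w‖ := by
    intro w hw
    have heig : LX w = z • w := by
      have := Module.End.mem_eigenspace_iff.mp hw
      simpa using this
    have hpow : (LX ^ mex) w = z ^ mex • w := hennion_pow_eig LX heig mex
    have h1 := hLY mex w
    rw [hpow, norm_smul, norm_pow] at h1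
    nlinarith [norm_nonneg w, norm_nonneg (ι w)]
  set g : ℕ → X := fun n => (R : ℂ)⁻¹ • (f n : X) with hgdef
  have hgmem : ∀ n, g n ∈ Module.End.eigenspace (LX : X →ₗ[ℂ] X) z :=
    fun n => Submodule.smul_mem _ _ (f n).2
  have hg1 : ∀ n, ‖g n‖ ≤ 1 := by
    intro n
    rw [hgdef]
    simp only [norm_smul, norm_inv, Complex.norm_real, Real.norm_eq_abs, abs_of_pos hR0]
    have : ‖(f n : X)‖ ≤ R := hfle n
    calc R⁻¹ * ‖(f n : X)‖ ≤ R⁻¹ * R := by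
          exact mul_le_mul_of_nonneg_left this (by positivity)
      _ = 1 := by field_simp
  have hgsep : ∀ a b : ℕ, a ≠ b → R⁻¹ ≤ ‖g a - g b‖ := by
    intro a b hab
    have h1 : g a - g b = (R : ℂ)⁻¹ • ((f a : X) - (f b : X)) := by rw [hgdef]; rw [smul_sub]
    rw [h1, norm_smul, norm_inv, Complex.norm_real, Real.norm_eq_abs, abs_of_pos hR0]
    have h2 : (1:ℝ) ≤ ‖(f a : X) - (f b : X)‖ := by
      have := hfsep hab
      simpa using this
    nlinarith [inv_pos.mpr hR0]
  obtain ⟨φ, hφmono, hφcauchy⟩ := hennion_subseq ι hcpt g hg1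
  set ε : ℝ := ‖z‖ ^ mex / 2 * R⁻¹ / C with hεdef
  have hε0 : 0 < ε := by
    have : 0 < ‖z‖ := hτ0.trans hz
    positivity
  obtain ⟨N, hN⟩ := Metric.cauchySeq_iff.mp hφcauchy ε hε0
  have hstep := hN N (le_refl N) (N+1) (Nat.le_succ N)
  rw [dist_eq_norm] at hstep
  set a := φ N
  set b := φ (N + 1)
  have hab : a ≠ b := Nat.ne_of_lt (hφmono (Nat.lt_succ_self N))
  have hmem : g a - g b ∈ Module.End.eigenspace (LX : X →ₗ[ℂ] X) z :=
    Submodule.sub_mem _ (hgmem a) (hgmem b)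
  have h1 := hlow _ hmem
  have h2 : ι (g a - g b) = ι (g a) - ι (g b) := map_sub ι _ _
  rw [h2] at h1
  have h3 := hgsep a b hab
  have hz0 : 0 < ‖z‖ := hτ0.trans hz
  have h4 : ‖z‖ ^ mex / 2 * R⁻¹ ≤ ‖z‖ ^ mex / 2 * ‖g a - g b‖ :=
    mul_le_mul_of_nonneg_left h3 (by positivity)
  have h5 : C * ‖ι (g a) - ι (g b)‖ < C * ε := mul_lt_mul_of_pos_left hstep hC
  have h6 : C * ε = ‖z‖ ^ mex / 2 * R⁻¹ := by
    rw [hεdef]; field_simp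
  linarith

end Hennion3

section Hennion4
variable {X Y : Type*} [NormedAddCommGroup X] [NormedSpace ℂ X]
  [NormedAddCommGroup Y] [NormedSpace ℂ Y]

lemma hennion_eig_finite [CompleteSpace X] (ι : X →L[ℂ] Y) (LX : X →L[ℂ] X) {τ C r : ℝ}
    (hτ0 : 0 < τ) (hC : 0 < C)
    (hLY : ∀ (n : ℕ) (h : X), ‖(LX ^ n) h‖ ≤ C * τ ^ n * ‖h‖ + C * ‖ι h‖)
    (hcpt : IsCompact (closure (ι '' Metric.closedBall (0 : X) 1)))
    (hr : τ < r) :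
    {w : ℂ | Module.End.HasEigenvalue (LX : X →ₗ[ℂ] X) w ∧ r ≤ ‖w‖}.Finite := by
  have hr0 : 0 < r := hτ0.trans hr
  by_contra hinf
  rw [← Set.not_infinite, not_not] at hinf
  set F := hinf.natEmbedding with hFdef
  set zk : ℕ → ℂ := fun k => (F k : ℂ) with hzkdef
  have hzinj : Function.Injective zk := fun a b hab => F.injective (Subtype.ext hab)
  have hzeig : ∀ k, Module.End.HasEigenvalue (LX : X →ₗ[ℂ] X) (zk k) := fun k => (F k).2.1
  have hzr : ∀ k, r ≤ ‖zk k‖ := fun k => (F k).2.2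
  have hzne : ∀ k, zk k ≠ 0 := by
    intro k h0
    have := hzr k
    rw [h0, norm_zero] at this
    linarith
  -- eigenvectors
  have hev : ∀ k, ∃ v : X, v ≠ 0 ∧ LX v = zk k • v := by
    intro k
    obtain ⟨v, hv⟩ := (hzeig k).exists_hasEigenvector
    exact ⟨v, hv.2, by simpa using Module.End.mem_eigenspace_iff.mp hv.1⟩
  choose e hene heeq using hev
  have hli : LinearIndependent ℂ e := by
    refine Module.End.eigenvectors_linearIndependent' (LX : X →ₗ[ℂ] X) zk hzinj e fun k => ?_
    refine ⟨Module.End.mem_eigenspace_iff.mpr (by simpa using heeq k), hene k⟩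
  -- the flag of spans
  set V : ℕ → Submodule ℂ X := fun k => Submodule.span ℂ (e '' Set.Iic k) with hVdef
  have hVfd : ∀ k, FiniteDimensional ℂ ↥(V k) := fun k =>
    FiniteDimensional.span_of_finite ℂ ((Set.finite_Iic k).image e)
  have hVclosed : ∀ k, IsClosed ((V k : Set X)) := fun k =>
    haveI := hVfd k
    Submodule.closed_of_finiteDimensional _
  have hVmono : ∀ {j k : ℕ}, j ≤ k → V j ≤ V k := fun h =>
    Submodule.span_mono (Set.image_mono (Set.Iic_subset_Iic.mpr h))
  have hemem : ∀ {i k : ℕ}, i ≤ k → e i ∈ V k := fun hik =>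
    Submodule.subset_span ⟨_, hik, rfl⟩
  have hnotmem : ∀ k, e (k+1) ∉ V k := by
    intro k
    exact hli.notMem_span_image (by simp)
  -- twisted invariance
  have hclaim : ∀ (k n : ℕ), ∀ x ∈ V (k+1), (LX ^ n) x - (zk (k+1)) ^ n • x ∈ V k := by
    intro k n
    set W : Submodule ℂ X :=
      { carrier := {x | (LX ^ n) x - (zk (k+1)) ^ n • x ∈ V k}
        add_mem' := by
          intro a b ha hb
          have : (LX ^ n) (a + b) - (zk (k+1)) ^ n • (a + b)
              = ((LX ^ n) a - (zk (k+1)) ^ n • a) + ((LX ^ n) b - (zk (k+1)) ^ n • b) := by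
            rw [map_add, smul_add]; abel
          simp only [Set.mem_setOf_eq] at *
          rw [this]; exact Submodule.add_mem _ ha hb
        zero_mem' := by simp
        smul_mem' := by
          intro c a ha
          have : (LX ^ n) (c • a) - (zk (k+1)) ^ n • (c • a)
              = c • ((LX ^ n) a - (zk (k+1)) ^ n • a) := by
            rw [map_smul, smul_sub, smul_comm]
          simp only [Set.mem_setOf_eq] at *
          rw [this]; exact Submodule.smul_mem _ _ ha } with hWdef
    intro x hx
    have hsub : V (k+1) ≤ W := by
      rw [hVdef, Submodule.span_le]
      rintro y ⟨i, hik, rfl⟩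
      have hpow : (LX ^ n) (e i) = (zk i) ^ n • e i := hennion_pow_eig LX (heeq i) n
      have : (LX ^ n) (e i) - (zk (k+1)) ^ n • e i = ((zk i) ^ n - (zk (k+1)) ^ n) • e i := by
        rw [hpow, sub_smul]
      show (LX ^ n) (e i) - (zk (k+1)) ^ n • e i ∈ V k
      rw [this]
      rcases Nat.lt_or_ge i (k+1) with hik' | hik'
      · exact Submodule.smul_mem _ _ (hemem (Nat.lt_succ_iff.mp hik'))
      · have : i = k + 1 := le_antisymm hik hik'
        rw [this, sub_self, zero_smul]
        exact Submodule.zero_mem _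
    exact hsub hx
  -- Riesz lemma chain
  have hriesz : ∀ k : ℕ, ∃ u : X, u ∈ V (k+1) ∧ ‖u‖ = 1 ∧
      ∀ y ∈ V k, (2:ℝ)⁻¹ ≤ ‖u - y‖ := by
    intro k
    set F' : Submodule ℂ ↥(V (k+1)) := (V k).comap (V (k+1)).subtype with hF'def
    have hF'closed : IsClosed (F' : Set ↥(V (k+1))) := by
      have : (F' : Set ↥(V (k+1))) = ((V (k+1)).subtype) ⁻¹' (V k : Set X) := rfl
      rw [this]
      exact (hVclosed k).preimage continuous_subtype_val
    have hex : ∃ x : ↥(V (k+1)), x ∉ F' := by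
      refine ⟨⟨e (k+1), hemem (le_refl (k+1))⟩, fun hmem => ?_⟩
      exact hnotmem k hmem
    obtain ⟨x₀, hx₀F, hx₀⟩ := riesz_lemma hF'closed hex (show (2:ℝ)⁻¹ < 1 by norm_num)
    have hx₀ne : (x₀ : X) ≠ 0 := by
      intro h0
      apply hx₀F
      have hz0 : x₀ = 0 := Subtype.ext h0
      rw [hz0]; exact F'.zero_mem
    have hn0 : ‖(x₀ : X)‖ ≠ 0 := norm_ne_zero_iff.mpr hx₀ne
    have hn0' : (0:ℝ) < ‖(x₀ : X)‖ := lt_of_le_of_ne (norm_nonneg _) (Ne.symm hn0)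
    refine ⟨(‖(x₀ : X)‖ : ℂ)⁻¹ • (x₀ : X), Submodule.smul_mem _ _ x₀.2, ?_, ?_⟩
    · rw [norm_smul, norm_inv, Complex.norm_real, Real.norm_eq_abs, abs_norm]
      field_simp
    · intro y hy
      have hy' : ((‖(x₀ : X)‖ : ℂ) • y) ∈ V k := Submodule.smul_mem _ _ hy
      have hymem : ((‖(x₀ : X)‖ : ℂ) • y) ∈ V (k+1) := hVmono (Nat.le_succ k) hy'
      have hyF' : (⟨(‖(x₀ : X)‖ : ℂ) • y, hymem⟩ : ↥(V (k+1))) ∈ F' := hy'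
      have hrr := hx₀ _ hyF'
      have hnorm_eq : ‖x₀ - (⟨(‖(x₀ : X)‖ : ℂ) • y, hymem⟩ : ↥(V (k+1)))‖
          = ‖(x₀ : X) - (‖(x₀ : X)‖ : ℂ) • y‖ := rfl
      have hx₀norm : ‖x₀‖ = ‖(x₀ : X)‖ := rfl
      rw [hnorm_eq, hx₀norm] at hrr
      have hsmul : (‖(x₀ : X)‖ : ℂ)⁻¹ • (x₀ : X) - y
          = (‖(x₀ : X)‖ : ℂ)⁻¹ • ((x₀ : X) - (‖(x₀ : X)‖ : ℂ) • y) := by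
        rw [smul_sub, smul_smul, inv_mul_cancel₀ (Complex.ofReal_ne_zero.mpr hn0), one_smul]
      rw [hsmul, norm_smul, norm_inv, Complex.norm_real, Real.norm_eq_abs, abs_norm]
      rw [← mul_le_mul_iff_right₀ hn0']
      calc ‖(x₀ : X)‖ * (2:ℝ)⁻¹ = (2:ℝ)⁻¹ * ‖(x₀ : X)‖ := by ring
        _ ≤ ‖(x₀ : X) - (‖(x₀ : X)‖ : ℂ) • y‖ := hrr
        _ = ‖(x₀ : X)‖ * (‖(x₀ : X)‖⁻¹ * ‖(x₀ : X) - (‖(x₀ : X)‖ : ℂ) • y‖) := by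
            field_simp
  choose u humem hunorm husep using hriesz
  -- separation of iterates
  have hsep : ∀ (n j k : ℕ), j < k → r ^ n * (2:ℝ)⁻¹ ≤ ‖(LX ^ n) (u k) - (LX ^ n) (u j)‖ := by
    intro n j k hjk
    set ζ : ℂ := (zk (k+1)) ^ n with hζdef
    have hζne : ζ ≠ 0 := pow_ne_zero _ (hzne (k+1))
    set w : X := (LX ^ n) (u k) - ζ • (u k) with hwdef
    have hw : w ∈ V k := hclaim k n (u k) (humem k)
    have hLuj : (LX ^ n) (u j) ∈ V k := by
      have h1 : (LX ^ n) (u j) - (zk (j+1)) ^ n • (u j) ∈ V j := hclaim j n (u j) (humem j)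
      have h2 : (LX ^ n) (u j) = ((LX ^ n) (u j) - (zk (j+1)) ^ n • (u j))
          + (zk (j+1)) ^ n • (u j) := by abel
      rw [h2]
      refine Submodule.add_mem _ (hVmono (le_of_lt hjk) h1) ?_
      exact Submodule.smul_mem _ _ (hVmono (Nat.succ_le_of_lt hjk) (humem j))
    set y : X := ζ⁻¹ • ((LX ^ n) (u j) - w) with hydef
    have hy : y ∈ V k := Submodule.smul_mem _ _ (Submodule.sub_mem _ hLuj hw)
    have heq : (LX ^ n) (u k) - (LX ^ n) (u j) = ζ • (u k - y) := by
      rw [hydef, smul_sub, smul_smul, mul_inv_cancel₀ hζne, one_smul, hwdef]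
      abel
    rw [heq, norm_smul]
    have h1 : (2:ℝ)⁻¹ ≤ ‖u k - y‖ := husep k y hy
    have h2 : r ^ n ≤ ‖ζ‖ := by
      rw [hζdef, norm_pow]
      exact pow_le_pow_left₀ (le_of_lt hr0) (hzr (k+1)) n
    have h3 : (0:ℝ) ≤ ‖ζ‖ := norm_nonneg _
    nlinarith [pow_pos hr0 n]
  -- contradiction via compactness
  obtain ⟨n, hn⟩ := hennion_exists_m hτ0.le hr (show (0:ℝ) < 8 * C by positivity)
  set ε : ℝ := r ^ n / (8 * C) with hεdef
  have hε0 : 0 < ε := by positivity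
  obtain ⟨φ, hφmono, hφcauchy⟩ := hennion_subseq ι hcpt u (fun k => le_of_eq (hunorm k))
  obtain ⟨N, hN⟩ := Metric.cauchySeq_iff.mp hφcauchy ε hε0
  have hstep := hN (N+1) (Nat.le_succ N) N (le_refl N)
  rw [dist_eq_norm] at hstep
  set a := φ N
  set b := φ (N + 1)
  have hab : a < b := hφmono (Nat.lt_succ_self N)
  have h1 := hsep n a b hab
  have h2 := hLY n (u b - u a)
  have h3 : ι (u b - u a) = ι (u b) - ι (u a) := map_sub ι _ _
  have h4 : (LX ^ n) (u b - u a) = (LX ^ n) (u b) - (LX ^ n) (u a) := map_sub _ _ _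
  rw [h3, h4] at h2
  have h5 : ‖u b - u a‖ ≤ 2 := by
    calc ‖u b - u a‖ ≤ ‖u b‖ + ‖u a‖ := norm_sub_le _ _
      _ = 2 := by rw [hunorm a, hunorm b]; norm_num
  have h6 : ‖ι (u b) - ι (u a)‖ < ε := hstep
  have h7 : C * ε = r ^ n / 8 := by
    rw [hεdef]; field_simp
  have h8 : C * τ ^ n * ‖u b - u a‖ ≤ C * τ ^ n * 2 := by
    refine mul_le_mul_of_nonneg_left h5 (by positivity)
  have h9 : C * ‖ι (u b) - ι (u a)‖ < C * ε := mul_lt_mul_of_pos_left h6 hC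
  nlinarith [pow_pos hr0 n, pow_pos hτ0 n]

end Hennion4

section Hennion5
variable {X Y : Type*} [NormedAddCommGroup X] [NormedSpace ℂ X]
  [NormedAddCommGroup Y] [NormedSpace ℂ Y]

lemma hennion_no_eigvec [CompleteSpace X] (LX : X →L[ℂ] X) {w : ℂ}
    (hw : ¬ Module.End.HasEigenvalue (LX : X →ₗ[ℂ] X) w) :
    ∀ v : X, LX v = w • v → v = 0 := by
  intro v hv
  by_contra hv0
  exact hw (Module.End.hasEigenvalue_of_hasEigenvector
    ⟨Module.End.mem_eigenspace_iff.mpr (by simpa using hv), hv0⟩)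

set_option maxHeartbeats 1000000 in
lemma hennion_not_eig_not_spec [CompleteSpace X] (ι : X →L[ℂ] Y) (LX : X →L[ℂ] X) {τ C : ℝ}
    (hτ0 : 0 < τ) (hC : 0 < C)
    (hLY : ∀ (n : ℕ) (h : X), ‖(LX ^ n) h‖ ≤ C * τ ^ n * ‖h‖ + C * ‖ι h‖)
    (hcpt : IsCompact (closure (ι '' Metric.closedBall (0 : X) 1)))
    {z : ℂ} (hz : τ < ‖z‖)
    (hne : ¬ Module.End.HasEigenvalue (LX : X →ₗ[ℂ] X) z) :
    z ∉ spectrum ℂ LX := by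
  intro hzspec
  have hz0' : (0:ℝ) < ‖z‖ := hτ0.trans hz
  have hz0 : z ≠ 0 := by
    intro h; rw [h, norm_zero] at hz0'; exact lt_irrefl 0 hz0'
  -- the finitely many eigenvalues of modulus ≥ ‖z‖
  have hFfin : {w : ℂ | Module.End.HasEigenvalue (LX : X →ₗ[ℂ] X) w ∧ ‖z‖ ≤ ‖w‖}.Finite :=
    hennion_eig_finite ι LX hτ0 hC hLY hcpt hz
  -- choose a good direction avoiding the eigenvalues
  have hsub : ∀ w : ℂ,
      {t : ℝ | ∃ s : ℝ, 0 < s ∧ w = z * (1 + s * (1 + t * Complex.I))}.Subsingleton := by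
    intro w t₁ ht₁ t₂ ht₂
    obtain ⟨s₁, hs₁, he₁⟩ := ht₁
    obtain ⟨s₂, hs₂, he₂⟩ := ht₂
    rw [he₁] at he₂
    have hc : (1 : ℂ) + s₁ * (1 + t₁ * Complex.I) = 1 + s₂ * (1 + t₂ * Complex.I) :=
      mul_left_cancel₀ hz0 he₂
    have hc2 : (s₁ : ℂ) * (1 + t₁ * Complex.I) = s₂ * (1 + t₂ * Complex.I) := by
      linear_combination hc
    have hre : s₁ = s₂ := by
      have := congrArg Complex.re hc2
      simpa using this
    have him : s₁ * t₁ = s₂ * t₂ := by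
      have := congrArg Complex.im hc2
      simpa using this
    rw [hre] at him
    exact mul_left_cancel₀ (ne_of_gt hs₂) him
  set Bt : Set ℝ := {t : ℝ | ∃ w ∈ {w : ℂ | Module.End.HasEigenvalue (LX : X →ₗ[ℂ] X) w
      ∧ ‖z‖ ≤ ‖w‖}, ∃ s : ℝ, 0 < s ∧ w = z * (1 + s * (1 + t * Complex.I))} with hBtdef
  have hBtfin : Bt.Finite := by
    have h1 : Bt ⊆ ⋃ w ∈ {w : ℂ | Module.End.HasEigenvalue (LX : X →ₗ[ℂ] X) w ∧ ‖z‖ ≤ ‖w‖},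
        {t : ℝ | ∃ s : ℝ, 0 < s ∧ w = z * (1 + s * (1 + t * Complex.I))} := by
      rintro t ⟨w, hw, hs⟩
      exact Set.mem_biUnion hw hs
    exact Set.Finite.subset (hFfin.biUnion fun w _ => (hsub w).finite) h1
  obtain ⟨t₀, ht₀⟩ := ((Set.Ioo_infinite (show (0:ℝ) < 1 by norm_num)).diff hBtfin).nonempty
  have ht₀bad : t₀ ∉ Bt := ht₀.2
  -- the path
  set p : ℝ → ℂ := fun s => z * (1 + s * (1 + t₀ * Complex.I)) with hpdef
  have hp0 : p 0 = z := by simp [hpdef]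
  have hpcont : Continuous p := by
    apply Continuous.mul continuous_const
    apply Continuous.add continuous_const
    exact (Complex.continuous_ofReal.mul continuous_const)
  have hplow : ∀ s : ℝ, 0 ≤ s → ‖z‖ * (1 + s) ≤ ‖p s‖ := by
    intro s hs
    have hre : ((1 : ℂ) + s * (1 + t₀ * Complex.I)).re = 1 + s := by simp
    calc ‖z‖ * (1 + s) = ‖z‖ * ((1 : ℂ) + s * (1 + t₀ * Complex.I)).re := by rw [hre]
      _ ≤ ‖z‖ * ‖(1 : ℂ) + s * (1 + t₀ * Complex.I)‖ := by
          refine mul_le_mul_of_nonneg_left ?_ (norm_nonneg z)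
          exact Complex.re_le_norm _
      _ = ‖p s‖ := (norm_mul _ _).symm
  have hznormle : ∀ s : ℝ, 0 ≤ s → ‖z‖ ≤ ‖p s‖ := by
    intro s hs
    calc ‖z‖ = ‖z‖ * 1 := (mul_one _).symm
      _ ≤ ‖z‖ * (1 + s) := by nlinarith
      _ ≤ ‖p s‖ := hplow s hs
  have hτp : ∀ s : ℝ, 0 ≤ s → τ < ‖p s‖ := fun s hs => lt_of_lt_of_le hz (hznormle s hs)
  have hnoeig : ∀ s : ℝ, 0 ≤ s → ¬ Module.End.HasEigenvalue (LX : X →ₗ[ℂ] X) (p s) := by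
    intro s hs
    rcases eq_or_lt_of_le hs with heq | hlt
    · rw [← heq, hp0]; exact hne
    · intro heig
      exact ht₀bad ⟨p s, ⟨heig, hznormle s hs⟩, s, hlt, rfl⟩
  set S : ℝ := ‖LX‖ * ‖(1 : X →L[ℂ] X)‖ / ‖z‖ + 1 with hSdef
  have hS0 : 0 < S := by positivity
  have hpSnorm : ‖LX‖ * ‖(1 : X →L[ℂ] X)‖ < ‖p S‖ := by
    have h1 := hplow S hS0.le
    have hzne : ‖z‖ ≠ 0 := ne_of_gt hz0'
    have h2 : ‖z‖ * (1 + S) = ‖LX‖ * ‖(1 : X →L[ℂ] X)‖ + 2 * ‖z‖ := by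
      have h3 : ‖LX‖ * ‖(1 : X →L[ℂ] X)‖ / ‖z‖ * ‖z‖ = ‖LX‖ * ‖(1 : X →L[ℂ] X)‖ :=
        div_mul_cancel₀ _ hzne
      rw [hSdef]
      nlinarith [h3]
    nlinarith
  have hpS : p S ∉ spectrum ℂ LX := by
    intro hmem
    have := spectrum.norm_le_norm_mul_of_mem hmem
    linarith
  -- the set where the path is in the spectrum
  set A : Set ℝ := {s : ℝ | s ∈ Set.Icc 0 S ∧ p s ∈ spectrum ℂ LX} with hAdef
  have hAclosed : IsClosed A := by
    have : A = Set.Icc 0 S ∩ p ⁻¹' (spectrum ℂ LX) := rfl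
    rw [this]
    exact isClosed_Icc.inter ((spectrum.isClosed LX).preimage hpcont)
  have hAne : A.Nonempty := ⟨0, ⟨le_refl 0, hS0.le⟩, by rwa [hp0]⟩
  have hAbdd : BddAbove A := ⟨S, fun x hx => hx.1.2⟩
  set a : ℝ := sSup A with hadef
  have haA : a ∈ A := hAclosed.csSup_mem hAne hAbdd
  have ha0 : 0 ≤ a := haA.1.1
  have haS : a ≤ S := haA.1.2
  have haspec : p a ∈ spectrum ℂ LX := haA.2
  have haltS : a < S := lt_of_le_of_ne haS (by intro h; rw [h] at haspec; exact hpS haspec)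
  have hgt : ∀ s : ℝ, a < s → s ≤ S → p s ∉ spectrum ℂ LX := by
    intro s has hsS hspec
    have : s ≤ a := le_csSup hAbdd ⟨⟨ha0.trans has.le, hsS⟩, hspec⟩
    linarith
  -- bounded below at p a
  obtain ⟨c, hc0, hcb⟩ := hennion_bounded_below ι LX hτ0 hC hLY hcpt (hτp a ha0)
    (hennion_no_eigvec LX (hnoeig a ha0))
  set T : X →L[ℂ] X := algebraMap ℂ (X →L[ℂ] X) (p a) - LX with hTdef
  have hTapp : ∀ x : X, T x = p a • x - LX x := by
    intro x
    rw [hTdef]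
    simp [Algebra.algebraMap_eq_smul_one]
  have hTlow : ∀ x : X, c * ‖x‖ ≤ ‖T x‖ := by
    intro x
    rw [hTapp, norm_sub_rev]
    exact hcb x
  have hTinj : Function.Injective T := by
    intro x₁ x₂ hx
    have h1 : T (x₁ - x₂) = 0 := by rw [map_sub, hx, sub_self]
    have h2 := hTlow (x₁ - x₂)
    rw [h1, norm_zero] at h2
    have h3 : ‖x₁ - x₂‖ ≤ 0 := by nlinarith [norm_nonneg (x₁ - x₂)]
    have h4 : x₁ - x₂ = 0 := by
      rw [← norm_le_zero_iff]; exact h3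
    exact sub_eq_zero.mp h4
  have hanti : AntilipschitzWith (Real.toNNReal c⁻¹) T := by
    refine T.antilipschitz_of_bound fun x => ?_
    rw [Real.coe_toNNReal _ (by positivity)]
    rw [inv_mul_eq_div, le_div_iff₀ hc0]
    calc ‖x‖ * c = c * ‖x‖ := by ring
      _ ≤ ‖T x‖ := hTlow x
  have hTclosed : IsClosed (Set.range T) := hanti.isClosed_range T.uniformContinuous
  have hTsurj : Function.Surjective T := by
    intro y
    have hmem : y ∈ closure (Set.range T) := by
      rw [Metric.mem_closure_iff]
      intro ε hε
      set ε' : ℝ := min (c / 2) (ε * c / (2 * ‖y‖ + 1)) with hε'def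
      have hε'0 : 0 < ε' := by
        refine lt_min (by positivity) (by positivity)
      obtain ⟨δ, hδ0, hδ⟩ := Metric.continuousAt_iff.mp (hpcont.continuousAt (x := a)) ε' hε'0
      set s : ℝ := min S (a + δ / 2) with hsdef
      have hsa : a < s := lt_min haltS (by linarith)
      have hsS : s ≤ S := min_le_left _ _
      have hs0 : 0 ≤ s := ha0.trans hsa.le
      have hsdist : dist s a < δ := by
        rw [Real.dist_eq, abs_of_pos (by linarith)]
        have : s ≤ a + δ / 2 := min_le_right _ _
        linarith
      have hpsdist : dist (p s) (p a) < ε' := hδ hsdist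
      have hpss : p s ∉ spectrum ℂ LX := hgt s hsa hsS
      have hunit : IsUnit (algebraMap ℂ (X →L[ℂ] X) (p s) - LX) :=
        spectrum.notMem_iff.mp hpss
      have hbij := ContinuousLinearMap.isUnit_iff_bijective.mp hunit
      obtain ⟨x, hx⟩ := hbij.2 y
      have hxapp : p s • x - LX x = y := by
        rw [← hx]; simp [Algebra.algebraMap_eq_smul_one]
      have hdiff : T x - y = (p a - p s) • x := by
        rw [hTapp, ← hxapp, sub_smul]; abel
      have hnd : ‖p a - p s‖ < ε' := by
        rw [← dist_eq_norm, dist_comm]; exact hpsdist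
      -- bound on ‖x‖
      have hb1 : c * ‖x‖ ≤ ‖T x‖ := hTlow x
      have hb2 : ‖T x‖ ≤ ‖y‖ + ‖p a - p s‖ * ‖x‖ := by
        calc ‖T x‖ = ‖y + (T x - y)‖ := by congr 1; abel
          _ ≤ ‖y‖ + ‖T x - y‖ := norm_add_le _ _
          _ = ‖y‖ + ‖p a - p s‖ * ‖x‖ := by rw [hdiff, norm_smul]
      have hε'1 : ε' ≤ c / 2 := min_le_left _ _
      have hxbound : ‖x‖ ≤ 2 * ‖y‖ / c := by
        have h5 : ‖p a - p s‖ * ‖x‖ ≤ (c / 2) * ‖x‖ := by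
          refine mul_le_mul_of_nonneg_right ?_ (norm_nonneg x)
          linarith
        rw [le_div_iff₀ hc0]
        nlinarith [norm_nonneg x, norm_nonneg y]
      refine ⟨T x, Set.mem_range_self x, ?_⟩
      have hε'2 : ε' ≤ ε * c / (2 * ‖y‖ + 1) := min_le_right _ _
      calc dist y (T x) = ‖T x - y‖ := by rw [dist_comm, dist_eq_norm]
        _ = ‖p a - p s‖ * ‖x‖ := by rw [hdiff, norm_smul]
        _ ≤ ε' * (2 * ‖y‖ / c) := by
            refine mul_le_mul (le_of_lt hnd) hxbound (norm_nonneg x) hε'0.le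
        _ ≤ (ε * c / (2 * ‖y‖ + 1)) * (2 * ‖y‖ / c) := by
            refine mul_le_mul_of_nonneg_right hε'2 (by positivity)
        _ < ε := by
            rw [div_mul_div_comm]
            rw [div_lt_iff₀ (by positivity)]
            nlinarith [norm_nonneg y]
    rw [hTclosed.closure_eq] at hmem
    exact hmem
  have hunit : IsUnit T := ContinuousLinearMap.isUnit_iff_bijective.mpr ⟨hTinj, hTsurj⟩
  exact (spectrum.mem_iff.mp haspec) hunit

end Hennion5

/-- Hennion's theorem: a uniform Lasota–Yorke inequality together with
compactness of the unit ball of `X` in `Y` implies quasi-compactness: outside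
any radius `r > τ` the spectrum consists of finitely many eigenvalues with
finite-dimensional eigenspaces. -/
theorem hennion_quasicompact
    {X Y : Type*} [NormedAddCommGroup X] [NormedSpace ℂ X] [CompleteSpace X]
    [NormedAddCommGroup Y] [NormedSpace ℂ Y] [CompleteSpace Y]
    (ι : X →L[ℂ] Y) (hι : Function.Injective ι)
    (LX : X →L[ℂ] X) (LY : Y →L[ℂ] Y)
    (hcomm : ∀ x : X, ι (LX x) = LY (ι x))
    (τ C : ℝ) (hτ0 : 0 < τ) (hτ1 : τ < 1) (hC : 0 < C)
    (hLY : ∀ (n : ℕ) (h : X), ‖(LX ^ n) h‖ ≤ C * τ ^ n * ‖h‖ + C * ‖ι h‖)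
    (hcpt : IsCompact (closure (ι '' Metric.closedBall (0 : X) 1))) :
    ∀ r : ℝ, τ < r →
      {z ∈ spectrum ℂ LX | r ≤ ‖z‖}.Finite ∧
      ∀ z ∈ spectrum ℂ LX, r ≤ ‖z‖ →
        Module.End.HasEigenvalue (LX : X →ₗ[ℂ] X) z ∧
        FiniteDimensional ℂ (Module.End.eigenspace (LX : X →ₗ[ℂ] X) z) := by
  intro r hr
  constructor
  · have h1 : {z ∈ spectrum ℂ LX | r ≤ ‖z‖} ⊆
        {w : ℂ | Module.End.HasEigenvalue (LX : X →ₗ[ℂ] X) w ∧ r ≤ ‖w‖} := by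
      rintro w ⟨hws, hwr⟩
      refine ⟨?_, hwr⟩
      by_contra hne
      exact hennion_not_eig_not_spec ι LX hτ0 hC hLY hcpt (lt_of_lt_of_le hr hwr) hne hws
    exact (hennion_eig_finite ι LX hτ0 hC hLY hcpt hr).subset h1
  · intro w hws hwr
    have hτw : τ < ‖w‖ := lt_of_lt_of_le hr hwr
    constructor
    · by_contra hne
      exact hennion_not_eig_not_spec ι LX hτ0 hC hLY hcpt hτw hne hws
    · exact hennion_eig_fd ι LX hτ0 hC hLY hcpt hτw
end
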